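/- arXiv:1310.4246 — 4 statements merged into one kernel-verified Lean document; each statement's English description precedes it below -/
import Mathlib

section
/- Let λ be a complex number with |λ| different from e^{δ₁} and from e^{δ₂}. If e^{δ₂} < |λ| < e^{δ₁}, then the kernel of T − λI on ℓ²_{δ₁,δ₂} is one-dimensional, spanned by the sequence k ↦ λ^{-k}; otherwise the kernel of T − λI is zero. -/
noncomputable section

namespace WeightedL2

/-- The weight `w k = e^{δ₁ k}` for `k ≤ 0` and `e^{δ₂ k}` for `k > 0`. -/
def w (δ₁ δ₂ : ℝ) (k : ℤ) : ℝ :=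
  if k ≤ 0 then Real.exp (δ₁ * k) else Real.exp (δ₂ * k)

lemma w_pos (δ₁ δ₂ : ℝ) (k : ℤ) : 0 < w δ₁ δ₂ k := by
  unfold w; split <;> exact Real.exp_pos _

/-- Multiplication by the weight, as a linear endomorphism of the space of
two-sided complex sequences. -/
def wmul (δ₁ δ₂ : ℝ) : (ℤ → ℂ) →ₗ[ℂ] (ℤ → ℂ) where
  toFun x := fun k => (w δ₁ δ₂ k : ℂ) * x k
  map_add' x y := by funext k; simp [mul_add]
  map_smul' c x := by funext k; simp [Pi.smul_apply, smul_eq_mul]; ring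

/-- The weighted Hilbert space `ℓ²_{δ₁,δ₂}`, consisting of two-sided complex
sequences `x` with `∑_{k ≤ 0} e^{2δ₁ k} |x_k|² < ∞` and
`∑_{k > 0} e^{2δ₂ k} |x_k|² < ∞`, viewed as a subspace of `ℤ → ℂ`. -/
def space (δ₁ δ₂ : ℝ) : Submodule ℂ (ℤ → ℂ) where
  carrier := {x | Memℓp (wmul δ₁ δ₂ x) 2}
  add_mem' {x y} hx hy := by simpa [map_add] using hx.add hy
  zero_mem' := by simpa [map_zero] using zero_memℓp (E := fun _ : ℤ => ℂ) (p := 2)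
  smul_mem' c x hx := by simpa [map_smul] using hx.const_smul c

/-- The canonical weighting isomorphism of `ℓ²_{δ₁,δ₂}` onto `ℓ²`. -/
def toLp (δ₁ δ₂ : ℝ) : space δ₁ δ₂ →ₗ[ℂ] lp (fun _ : ℤ => ℂ) 2 where
  toFun x := ⟨wmul δ₁ δ₂ x.1, x.2⟩
  map_add' x y := by ext k; simp [map_add]; rfl
  map_smul' c x := by ext k; simp [map_smul]

lemma toLp_injective (δ₁ δ₂ : ℝ) : Function.Injective (toLp δ₁ δ₂) := by
  intro x y hxy
  ext k
  have h : (w δ₁ δ₂ k : ℂ) * x.1 k = (w δ₁ δ₂ k : ℂ) * y.1 k :=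
    congrFun (congrArg Subtype.val hxy) k
  have hw : (w δ₁ δ₂ k : ℂ) ≠ 0 := by
    exact_mod_cast (w_pos δ₁ δ₂ k).ne'
  exact mul_left_cancel₀ hw h

/-- The norm on `ℓ²_{δ₁,δ₂}`:
`‖x‖² = ∑_{k ≤ 0} e^{2δ₁ k}|x_k|² + ∑_{k > 0} e^{2δ₂ k}|x_k|²`. -/
instance (δ₁ δ₂ : ℝ) : NormedAddCommGroup (space δ₁ δ₂) :=
  NormedAddCommGroup.induced _ _ (toLp δ₁ δ₂) (toLp_injective δ₁ δ₂)

instance (δ₁ δ₂ : ℝ) : NormedSpace ℂ (space δ₁ δ₂) :=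
  NormedSpace.induced ℂ _ _ (toLp δ₁ δ₂)

end WeightedL2

namespace WeightedL2

lemma mem_space_iff (δ₁ δ₂ : ℝ) (x : ℤ → ℂ) :
    x ∈ space δ₁ δ₂ ↔ Memℓp (wmul δ₁ δ₂ x) 2 := Iff.rfl

lemma norm_wmul (δ₁ δ₂ : ℝ) (x : ℤ → ℂ) (k : ℤ) :
    ‖wmul δ₁ δ₂ x k‖ = w δ₁ δ₂ k * ‖x k‖ := by
  simp only [wmul, LinearMap.coe_mk, AddHom.coe_mk]
  rw [norm_mul, Complex.norm_real, Real.norm_of_nonneg (w_pos δ₁ δ₂ k).le]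

lemma two_toReal : ((2:ENNReal)).toReal = 2 := by norm_num

lemma rpow_two_eq (x : ℝ) : x ^ ((2:ENNReal)).toReal = x ^ 2 := by
  rw [show ((2:ENNReal)).toReal = (2:ℝ) by norm_num, ← Real.rpow_natCast x 2]; norm_num

/-- the weight formula specialized -/
lemma w_nonpos (δ₁ δ₂ : ℝ) (k : ℤ) (hk : k ≤ 0) : w δ₁ δ₂ k = Real.exp (δ₁ * k) := if_pos hk

lemma w_pos' (δ₁ δ₂ : ℝ) (k : ℤ) (hk : 0 < k) : w δ₁ δ₂ k = Real.exp (δ₂ * k) :=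
  if_neg (not_le.mpr hk)

/-- Membership of the geometric sequence when the strict inequalities hold. -/
lemma geom_mem (δ₁ δ₂ : ℝ) (lam : ℂ)
    (hl : Real.exp δ₂ < ‖lam‖) (hu : ‖lam‖ < Real.exp δ₁) :
    (fun k : ℤ => lam ^ (-k)) ∈ space δ₁ δ₂ := by
  set r := ‖lam‖ with hr
  have hr0 : 0 < r := lt_trans (Real.exp_pos δ₂) hl
  rw [mem_space_iff]
  apply memℓp_gen
  have hterm : ∀ k : ℤ, ‖wmul δ₁ δ₂ (fun k : ℤ => lam ^ (-k)) k‖ ^ ((2:ENNReal)).toReal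
      = (w δ₁ δ₂ k * r ^ (-k)) ^ 2 := by
    intro k
    rw [rpow_two_eq, norm_wmul]
    congr 2
    rw [norm_zpow]
  simp only [hterm]
  rw [summable_int_iff_summable_nat_and_neg]
  constructor
  · have hq : (Real.exp δ₂ / r) ^ 2 < 1 := by
      apply pow_lt_one₀ (by positivity) _ (by norm_num)
      rw [div_lt_one hr0]; exact hl
    apply Summable.of_nonneg_of_le (fun n => by positivity)
      (fun n => le_of_eq ?_) (summable_geometric_of_lt_one (by positivity) hq)
    rcases Nat.eq_zero_or_pos n with h0 | h0
    · subst h0; simp [w]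
    · rw [w_pos' _ _ _ (by exact_mod_cast h0)]
      rw [zpow_neg, zpow_natCast,
        show δ₂ * (((n:ℤ)):ℝ) = (n:ℝ) * δ₂ by push_cast; ring, Real.exp_nat_mul]
      rw [← div_eq_mul_inv, ← div_pow, ← pow_mul, mul_comm n 2, pow_mul, div_pow]
  · have hq : (r / Real.exp δ₁) ^ 2 < 1 := by
      apply pow_lt_one₀ (by positivity) _ (by norm_num)
      rw [div_lt_one (Real.exp_pos δ₁)]; exact hu
    apply Summable.of_nonneg_of_le (fun n => by positivity)
      (fun n => le_of_eq ?_) (summable_geometric_of_lt_one (by positivity) hq)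
    rw [w_nonpos _ _ _ (by simp), neg_neg, zpow_natCast]
    rw [show δ₁ * ((-(n:ℤ) : ℤ) : ℝ) = -((n:ℝ) * δ₁) by push_cast; ring]
    rw [Real.exp_neg, Real.exp_nat_mul, mul_comm]
    rw [← div_eq_mul_inv, ← div_pow, ← pow_mul, mul_comm n 2, pow_mul, div_pow]

lemma ker_seq (lam : ℂ) (hlam : lam ≠ 0) (x : ℤ → ℂ)
    (h : ∀ k : ℤ, x (k - 1) = lam * x k) (k : ℤ) : x k = x 0 * lam ^ (-k) := by
  induction k using Int.induction_on with
  | zero => simp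
  | succ n ih =>
      have h1 := h ((n:ℤ) + 1)
      rw [add_sub_cancel_right, ih] at h1
      apply mul_left_cancel₀ hlam
      rw [← h1, show (-((n:ℤ)+1)) = (-n) + (-1) by ring, zpow_add₀ hlam, zpow_neg_one]
      field_simp
  | pred n ih =>
      have h1 := h (-(n:ℤ))
      rw [ih] at h1
      rw [show (-(n:ℤ) - 1 : ℤ) = -((n:ℤ)+1) by ring] at h1 ⊢
      rw [h1, show (-(-((n:ℤ)+1))) = (-(-(n:ℤ))) + 1 by ring, zpow_add₀ hlam, zpow_one]
      ring

lemma geom_not_mem (δ₁ δ₂ : ℝ) (lam : ℂ) (hlam : lam ≠ 0) (c : ℂ) (hc : c ≠ 0)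
    (h : ¬(Real.exp δ₂ < ‖lam‖ ∧ ‖lam‖ < Real.exp δ₁)) :
    (fun k : ℤ => c * lam ^ (-k)) ∉ space δ₁ δ₂ := by
  intro hmem
  rw [mem_space_iff] at hmem
  have hs := hmem.summable (by rw [two_toReal]; norm_num)
  set r := ‖lam‖ with hr
  have hr0 : 0 < r := by
    rw [hr]; exact norm_pos_iff.mpr hlam
  have hc0 : 0 < ‖c‖ ^ 2 := by
    have : 0 < ‖c‖ := norm_pos_iff.mpr hc
    positivity
  have hterm : ∀ k : ℤ, ‖wmul δ₁ δ₂ (fun k : ℤ => c * lam ^ (-k)) k‖ ^ ((2:ENNReal)).toReal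
      = (w δ₁ δ₂ k * (‖c‖ * r ^ (-k))) ^ 2 := by
    intro k
    rw [rpow_two_eq, norm_wmul]
    congr 2
    rw [norm_mul]
    congr 1
    rw [norm_zpow]
  simp only [hterm] at hs
  rw [summable_int_iff_summable_nat_and_neg] at hs
  rcases not_and_or.mp h with h' | h'
  · push_neg at h'
    have hten := hs.1.tendsto_atTop_zero.eventually_lt_const hc0
    obtain ⟨N, hN⟩ := hten.exists_forall_of_atTop
    have hb : ∀ n : ℕ, 1 ≤ n →
        ‖c‖ ^ 2 ≤ (w δ₁ δ₂ (n:ℤ) * (‖c‖ * r ^ (-(n:ℤ)))) ^ 2 := by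
      intro n hn
      have hw : (1:ℝ) ≤ w δ₁ δ₂ (n:ℤ) * r ^ (-(n:ℤ)) := by
        rw [w_pos' _ _ _ (by exact_mod_cast hn), zpow_neg, zpow_natCast, ← div_eq_mul_inv,
          one_le_div (by positivity)]
        push_cast
        rw [mul_comm δ₂, Real.exp_nat_mul]
        exact pow_le_pow_left₀ hr0.le h' _
      calc ‖c‖ ^ 2 = (1 * ‖c‖) ^ 2 := by ring
        _ ≤ ((w δ₁ δ₂ (n:ℤ) * r ^ (-(n:ℤ))) * ‖c‖) ^ 2 := by
            apply pow_le_pow_left₀ (by positivity)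
            exact mul_le_mul_of_nonneg_right hw (norm_nonneg c)
        _ = (w δ₁ δ₂ (n:ℤ) * (‖c‖ * r ^ (-(n:ℤ)))) ^ 2 := by ring
    exact absurd (hb (N+1) (by omega)) (not_le.mpr (hN (N+1) (by omega)))
  · push_neg at h'
    have hten := hs.2.tendsto_atTop_zero.eventually_lt_const hc0
    obtain ⟨N, hN⟩ := hten.exists_forall_of_atTop
    have hb : ‖c‖ ^ 2 ≤ (w δ₁ δ₂ (-(N:ℤ)) * (‖c‖ * r ^ (-(-(N:ℤ))))) ^ 2 := by
      have hw : (1:ℝ) ≤ w δ₁ δ₂ (-(N:ℤ)) * r ^ (-(-(N:ℤ))) := by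
        rw [w_nonpos _ _ _ (by omega), neg_neg, zpow_natCast]
        push_cast
        rw [show δ₁ * -(N:ℝ) = -((N:ℝ) * δ₁) by ring, Real.exp_neg, Real.exp_nat_mul,
          ← div_eq_inv_mul, one_le_div (by positivity)]
        exact pow_le_pow_left₀ (Real.exp_pos δ₁).le h' _
      calc ‖c‖ ^ 2 = (1 * ‖c‖) ^ 2 := by ring
        _ ≤ ((w δ₁ δ₂ (-(N:ℤ)) * r ^ (-(-(N:ℤ)))) * ‖c‖) ^ 2 := by
            apply pow_le_pow_left₀ (by positivity)
            exact mul_le_mul_of_nonneg_right hw (norm_nonneg c)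
        _ = _ := by ring
    exact absurd hb (not_le.mpr (hN N le_rfl))

end WeightedL2

set_option synthInstance.maxHeartbeats 1000000 in
set_option maxHeartbeats 1000000 in
open WeightedL2 in
/-- Let `λ` be a complex number with `|λ|` different from `e^{δ₁}` and
from `e^{δ₂}`. If `e^{δ₂} < |λ| < e^{δ₁}`, then the kernel of `T − λI` on `ℓ²_{δ₁,δ₂}`
is one-dimensional, spanned by the sequence `k ↦ λ^{-k}`; otherwise the kernel of
`T − λI` is zero. -/
theorem ker_shift_sub_smul_id (δ₁ δ₂ : ℝ)
    (T : space δ₁ δ₂ →L[ℂ] space δ₁ δ₂)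
    (hT : ∀ (x : space δ₁ δ₂) (k : ℤ), (T x : ℤ → ℂ) k = (x : ℤ → ℂ) (k - 1))
    (lam : ℂ) (h₁ : ‖lam‖ ≠ Real.exp δ₁) (h₂ : ‖lam‖ ≠ Real.exp δ₂) :
    (Real.exp δ₂ < ‖lam‖ ∧ ‖lam‖ < Real.exp δ₁ →
      Module.rank ℂ (LinearMap.ker ((T - lam • (1 : space δ₁ δ₂ →L[ℂ] space δ₁ δ₂) : space δ₁ δ₂ →L[ℂ] space δ₁ δ₂) : space δ₁ δ₂ →ₗ[ℂ] space δ₁ δ₂)) = 1 ∧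
      ∀ x : space δ₁ δ₂, x ∈ LinearMap.ker ((T - lam • (1 : space δ₁ δ₂ →L[ℂ] space δ₁ δ₂) : space δ₁ δ₂ →L[ℂ] space δ₁ δ₂) : space δ₁ δ₂ →ₗ[ℂ] space δ₁ δ₂) ↔
        ∃ c : ℂ, ∀ k : ℤ, (x : ℤ → ℂ) k = c * lam ^ (-k)) ∧
    (¬ (Real.exp δ₂ < ‖lam‖ ∧ ‖lam‖ < Real.exp δ₁) →
      LinearMap.ker ((T - lam • (1 : space δ₁ δ₂ →L[ℂ] space δ₁ δ₂) : space δ₁ δ₂ →L[ℂ] space δ₁ δ₂) : space δ₁ δ₂ →ₗ[ℂ] space δ₁ δ₂) = ⊥) := by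
  have key : ∀ x : space δ₁ δ₂, x ∈ LinearMap.ker ((T - lam • (1 : space δ₁ δ₂ →L[ℂ] space δ₁ δ₂) : space δ₁ δ₂ →L[ℂ] space δ₁ δ₂) : space δ₁ δ₂ →ₗ[ℂ] space δ₁ δ₂) ↔
      ∀ k : ℤ, (x : ℤ → ℂ) (k - 1) = lam * (x : ℤ → ℂ) k := by
    intro x
    rw [LinearMap.mem_ker, ContinuousLinearMap.coe_coe]
    constructor
    · intro hx k
      have h0 : ((T - lam • (1 : space δ₁ δ₂ →L[ℂ] space δ₁ δ₂)) x : ℤ → ℂ) k = 0 := by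
        rw [hx]; rfl
      rw [ContinuousLinearMap.sub_apply, ContinuousLinearMap.smul_apply,
        ContinuousLinearMap.one_apply] at h0
      have h0' : (T x : ℤ → ℂ) k - lam * (x : ℤ → ℂ) k = 0 := by
        simpa [AddSubgroupClass.coe_sub, SetLike.val_smul, Pi.sub_apply, Pi.smul_apply,
          smul_eq_mul] using h0
      rw [hT] at h0'
      exact sub_eq_zero.mp h0'
    · intro hrec
      apply Subtype.ext
      funext k
      have : ((T - lam • (1 : space δ₁ δ₂ →L[ℂ] space δ₁ δ₂)) x : ℤ → ℂ) k
          = (T x : ℤ → ℂ) k - lam * (x : ℤ → ℂ) k := by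
        rw [ContinuousLinearMap.sub_apply, ContinuousLinearMap.smul_apply,
          ContinuousLinearMap.one_apply]
        simp [AddSubgroupClass.coe_sub, SetLike.val_smul, Pi.sub_apply, Pi.smul_apply,
          smul_eq_mul]
      rw [this, hT, hrec k, sub_self]
      rfl
  constructor
  · intro hin
    have hlam : lam ≠ 0 := by
      intro h0
      have := hin.1
      rw [h0] at this
      simp only [norm_zero] at this
      linarith [Real.exp_pos δ₂]
    set e : space δ₁ δ₂ := ⟨fun k => lam ^ (-k), geom_mem δ₁ δ₂ lam hin.1 hin.2⟩ with he
    have hiff : ∀ x : space δ₁ δ₂, x ∈ LinearMap.ker ((T - lam • (1 : space δ₁ δ₂ →L[ℂ] space δ₁ δ₂) : space δ₁ δ₂ →L[ℂ] space δ₁ δ₂) : space δ₁ δ₂ →ₗ[ℂ] space δ₁ δ₂) ↔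
        ∃ c : ℂ, ∀ k : ℤ, (x : ℤ → ℂ) k = c * lam ^ (-k) := by
      intro x
      rw [key x]
      constructor
      · intro hrec
        exact ⟨(x : ℤ → ℂ) 0, ker_seq lam hlam _ hrec⟩
      · rintro ⟨c, hc⟩ k
        rw [hc k, hc (k - 1), show (-(k-1)) = (-k) + 1 by ring, zpow_add₀ hlam, zpow_one]
        ring
    have he0 : e ≠ 0 := by
      intro h
      have := congrFun (congrArg Subtype.val h) 0
      simp [he] at this
    have hker : LinearMap.ker ((T - lam • (1 : space δ₁ δ₂ →L[ℂ] space δ₁ δ₂) : space δ₁ δ₂ →L[ℂ] space δ₁ δ₂) : space δ₁ δ₂ →ₗ[ℂ] space δ₁ δ₂) = Submodule.span ℂ {e} := by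
      apply le_antisymm
      · intro x hx
        obtain ⟨c, hc⟩ := (hiff x).mp hx
        rw [Submodule.mem_span_singleton]
        refine ⟨c, ?_⟩
        apply Subtype.ext
        funext k
        rw [show ((c • e : space δ₁ δ₂) : ℤ → ℂ) k = c * ((e : ℤ → ℂ) k) from rfl]
        rw [hc k]
      · rw [Submodule.span_singleton_le_iff_mem]
        exact (hiff e).mpr ⟨1, fun k => by rw [one_mul]⟩
    refine ⟨?_, hiff⟩
    rw [hker]
    exact Module.rank_eq_one_iff_finrank_eq_one.mpr (finrank_span_singleton he0)
  · intro hout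
    rw [eq_bot_iff]
    intro x hx
    rw [Submodule.mem_bot]
    by_cases hlam : lam = 0
    · apply Subtype.ext
      funext k
      have := (key x).mp hx (k + 1)
      rw [add_sub_cancel_right, hlam, zero_mul] at this
      exact this
    · have hc := ker_seq lam hlam _ ((key x).mp hx)
      by_cases h0 : (x : ℤ → ℂ) 0 = 0
      · apply Subtype.ext
        funext k
        rw [hc k, h0, zero_mul]
        rfl
      · exfalso
        have hfun : (fun k : ℤ => (x : ℤ → ℂ) 0 * lam ^ (-k)) = (x : ℤ → ℂ) :=
          funext fun k => (hc k).symm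
        have hxmem : (x : ℤ → ℂ) ∈ space δ₁ δ₂ := x.2
        rw [← hfun] at hxmem
        exact geom_not_mem δ₁ δ₂ lam hlam _ h0 hout hxmem
end
end

section
/- Assume δ₂ < δ₁ and let λ be a complex number with |λ| different from e^{δ₁} and from e^{δ₂}. For every positive integer m, the kernel of (T − λI)^m on ℓ²_{δ₁,δ₂} has complex dimension m if e^{δ₂} < |λ| < e^{δ₁}, and is zero otherwise. -/
noncomputable section

namespace ShiftKerAux

open WeightedL2
open scoped ENNReal

/-- shift endomorphism on all sequences -/
def B : Module.End ℂ (ℤ → ℂ) where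
  toFun x := fun k => x (k - 1)
  map_add' _ _ := rfl
  map_smul' _ _ := rfl

lemma B_pow_apply (j : ℕ) (x : ℤ → ℂ) (k : ℤ) : (B ^ j) x k = x (k - j) := by
  induction j generalizing x k with
  | zero => simp
  | succ n ih =>
    rw [pow_succ]
    show ((B ^ n) (B x)) k = _
    rw [ih]
    show x (k - n - 1) = _
    congr 1
    push_cast
    ring

def A (lam : ℂ) : Module.End ℂ (ℤ → ℂ) := B - lam • 1

lemma A_apply (lam : ℂ) (x : ℤ → ℂ) (k : ℤ) : A lam x k = x (k - 1) - lam * x k := rfl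

lemma A_pow_apply (lam : ℂ) (m : ℕ) (x : ℤ → ℂ) (k : ℤ) :
    (A lam ^ m) x k = ∑ j ∈ Finset.range (m + 1),
      (m.choose j : ℂ) * (-lam) ^ (m - j) * x (k - j) := by
  have hc : Commute B ((-lam) • (1 : Module.End ℂ (ℤ → ℂ))) :=
    (Commute.one_right B).smul_right _
  have hA : A lam = B + (-lam) • 1 := by
    simp only [A, sub_eq_add_neg]
    congr 1
    exact (neg_smul lam (1:Module.End ℂ (ℤ→ℂ))).symm
  rw [hA, hc.add_pow]
  have key : ∀ j, ((B ^ j * ((-lam) • (1:Module.End ℂ (ℤ→ℂ))) ^ (m - j) * (m.choose j : Module.End ℂ (ℤ→ℂ))) x) k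
      = (m.choose j : ℂ) * (-lam) ^ (m-j) * x (k - j) := by
    intro j
    rw [smul_pow, one_pow]
    simp [Module.End.mul_apply, B_pow_apply, Module.End.natCast_apply]
    ring
  rw [LinearMap.sum_apply]
  simp only [Finset.sum_apply]
  exact Finset.sum_congr rfl fun j _ => key j

lemma eq_zero_of_window (lam : ℂ) (hlam : lam ≠ 0) (m : ℕ) (x : ℤ → ℂ)
    (hx : (A lam ^ m) x = 0) (h0 : ∀ i : ℕ, i < m → x i = 0) : x = 0 := by
  have E : ∀ k : ℤ, ∑ j ∈ Finset.range (m + 1),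
      (m.choose j : ℂ) * (-lam) ^ (m - j) * x (k - j) = 0 := by
    intro k
    rw [← A_pow_apply lam m x k, hx]
    rfl
  have fwd : ∀ n : ℕ, x n = 0 := by
    intro n
    induction n using Nat.strong_induction_on with
    | _ n ih =>
      by_cases hn : n < m
      · exact h0 n hn
      · push_neg at hn
        have hE := E n
        rw [Finset.sum_range_succ'] at hE
        have hz : ∀ i ∈ Finset.range m,
            (m.choose (i+1) : ℂ) * (-lam) ^ (m - (i+1)) * x ((n:ℤ) - ((i+1 : ℕ) : ℤ)) = 0 := by
          intro i hi
          rw [Finset.mem_range] at hi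
          have h1 : (n:ℤ) - ((i+1:ℕ):ℤ) = ((n - (i+1) : ℕ) : ℤ) := by
            have : i + 1 ≤ n := le_trans (Nat.succ_le_of_lt hi) hn
            omega
          rw [h1, ih _ (by omega), mul_zero]
        rw [Finset.sum_eq_zero hz, zero_add] at hE
        simp only [Nat.choose_zero_right, Nat.cast_one, one_mul, Nat.sub_zero,
          Nat.cast_zero, sub_zero] at hE
        have hpow : (-lam) ^ m ≠ 0 := pow_ne_zero _ (neg_ne_zero.mpr hlam)
        have hx0 : x (n:ℤ) = 0 := by
          rcases mul_eq_zero.mp hE with h | h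
          · exact absurd h hpow
          · exact h
        exact hx0
  have bwd : ∀ n : ℕ, x (-(n+1 : ℕ)) = 0 := by
    intro n
    induction n using Nat.strong_induction_on with
    | _ n ih =>
      have hE := E ((-(n+1 : ℕ) : ℤ) + m)
      rw [Finset.sum_range_succ] at hE
      have hz : ∀ j ∈ Finset.range m,
          (m.choose j : ℂ) * (-lam) ^ (m - j) * x ((-(n+1:ℕ) : ℤ) + m - j) = 0 := by
        intro j hj
        rw [Finset.mem_range] at hj
        set i : ℤ := (-(n+1:ℕ) : ℤ) + m - j with hi
        have hlow : -(n:ℤ) ≤ i := by omega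
        rcases le_or_gt 0 i with hpos | hneg
        · have : i = ((i.toNat : ℕ) : ℤ) := (Int.toNat_of_nonneg hpos).symm
          rw [this, fwd, mul_zero]
        · have hn' : i = -((((-i - 1).toNat) + 1 : ℕ) : ℤ) := by omega
          rw [hn', ih, mul_zero]
          omega
      rw [Finset.sum_eq_zero hz, zero_add] at hE
      simp only [Nat.choose_self, Nat.cast_one, one_mul, Nat.sub_self, pow_zero] at hE
      simpa using hE
  funext k
  rcases le_or_gt 0 k with h | h
  · have : k = ((k.toNat : ℕ) : ℤ) := (Int.toNat_of_nonneg h).symm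
    rw [this, fwd]; rfl
  · have : k = -((((-k - 1).toNat) + 1 : ℕ) : ℤ) := by omega
    rw [this, bwd]; rfl

def v (lam : ℂ) (j : ℕ) : ℤ → ℂ := fun k => lam ^ (-k) * (k : ℂ) ^ j

lemma A_v (lam : ℂ) (hlam : lam ≠ 0) (j : ℕ) :
    A lam (v lam j) = ∑ i ∈ Finset.range j,
      (lam * (j.choose i : ℂ) * (-1) ^ (j - i)) • v lam i := by
  funext k
  rw [A_apply]
  simp only [Finset.sum_apply, Pi.smul_apply, smul_eq_mul, v]
  have hbin : ((k : ℂ) - 1) ^ j = ∑ i ∈ Finset.range (j + 1),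
      (k:ℂ) ^ i * (-1) ^ (j - i) * (j.choose i) := by
    have := add_pow (k : ℂ) (-1) j
    simpa [sub_eq_add_neg] using this
  have hzp : lam ^ (-(k - 1)) = lam * lam ^ (-k) := by
    rw [neg_sub, sub_eq_add_neg, add_comm, zpow_add₀ hlam, zpow_one]
    ring
  push_cast
  rw [hzp, hbin, Finset.sum_range_succ]
  simp only [Nat.sub_self, pow_zero, Nat.choose_self, Nat.cast_one, mul_one]
  rw [mul_add]
  have hS : lam * lam ^ (-k) * (∑ i ∈ Finset.range j, (k:ℂ) ^ i * (-1) ^ (j - i) * (j.choose i))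
      = ∑ i ∈ Finset.range j, lam * (j.choose i : ℂ) * (-1) ^ (j - i) * (lam ^ (-k) * (k:ℂ) ^ i) := by
    rw [Finset.mul_sum]
    apply Finset.sum_congr rfl
    intro i _
    ring
  rw [hS]
  ring

lemma A_pow_v (lam : ℂ) (hlam : lam ≠ 0) (j : ℕ) :
    (A lam ^ (j + 1)) (v lam j) = 0 := by
  induction j using Nat.strong_induction_on with
  | _ j ih =>
    rw [pow_succ]
    show (A lam ^ j) (A lam (v lam j)) = 0
    rw [A_v lam hlam j, map_sum]
    apply Finset.sum_eq_zero
    intro i hi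
    rw [Finset.mem_range] at hi
    rw [map_smul]
    have hv : (A lam ^ j) (v lam i) = 0 := by
      have hj : j = (j - (i+1)) + (i + 1) := by omega
      rw [hj, pow_add]
      show (A lam ^ (j - (i+1))) ((A lam ^ (i+1)) (v lam i)) = 0
      rw [ih i hi, map_zero]
    rw [hv, smul_zero]

lemma A_pow_v_of_lt (lam : ℂ) (hlam : lam ≠ 0) {j m : ℕ} (h : j < m) :
    (A lam ^ m) (v lam j) = 0 := by
  have hm : m = (m - (j+1)) + (j + 1) := by omega
  rw [hm, pow_add]
  show (A lam ^ (m - (j+1))) ((A lam ^ (j+1)) (v lam j)) = 0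
  rw [A_pow_v lam hlam j, map_zero]

lemma term_eq (δ₁ δ₂ : ℝ) (x : ℤ → ℂ) (k : ℤ) :
    ‖wmul δ₁ δ₂ x k‖ ^ ((2:ℝ≥0∞)).toReal = (w δ₁ δ₂ k)^2 * (‖x k‖)^2 := by
  have h2 : (2:ℝ≥0∞).toReal = ((2:ℕ):ℝ) := by norm_num
  rw [h2, Real.rpow_natCast]
  show ‖(w δ₁ δ₂ k : ℂ) * x k‖ ^ (2:ℕ) = _
  rw [norm_mul, mul_pow]
  congr 1
  rw [Complex.norm_real, Real.norm_eq_abs, abs_of_pos (w_pos δ₁ δ₂ k)]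

lemma mem_space_iff (δ₁ δ₂ : ℝ) (x : ℤ → ℂ) :
    x ∈ space δ₁ δ₂ ↔ Summable (fun k : ℤ => (w δ₁ δ₂ k)^2 * (‖x k‖)^2) := by
  change Memℓp (wmul δ₁ δ₂ x) 2 ↔ _
  rw [memℓp_gen_iff (by norm_num : 0 < (2:ℝ≥0∞).toReal)]
  exact summable_congr fun k => term_eq δ₁ δ₂ x k


lemma abs_v (lam : ℂ) (j : ℕ) (k : ℤ) :
    ‖v lam j k‖ = (‖lam‖) ^ (-k) * |(k:ℝ)| ^ j := by
  simp only [v, norm_mul, norm_zpow, norm_pow]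
  congr 2
  exact_mod_cast Complex.norm_intCast k

lemma F_pos (δ₁ δ₂ : ℝ) (lam : ℂ) (hlam : lam ≠ 0) (j : ℕ) (n : ℕ) :
    (w δ₁ δ₂ (n:ℤ))^2 * (‖v lam j (n:ℤ)‖)^2
      = (n:ℝ) ^ (2*j) * ((Real.exp δ₂ / ‖lam‖)^2) ^ n := by
  set a := ‖lam‖ with ha
  have ha0 : a ≠ 0 := by simpa [ha] using hlam
  rw [abs_v]
  have habs : |((n:ℤ):ℝ)| = (n:ℝ) := by
    push_cast
    exact abs_of_nonneg (Nat.cast_nonneg n)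
  rw [habs]
  have hz : a ^ (-(n:ℤ)) = (a ^ n)⁻¹ := by
    rw [zpow_neg, zpow_natCast]
  rw [hz]
  rcases Nat.eq_zero_or_pos n with h0 | h0
  · subst h0
    rcases Nat.eq_zero_or_pos j with hj | hj
    · subst hj; simp [w]
    · simp [w, zero_pow (show j ≠ 0 by omega), zero_pow (show 2*j ≠ 0 by omega)]
  · have hn0 : ¬ ((n:ℤ) ≤ 0) := by omega
    have hw : w δ₁ δ₂ (n:ℤ) = Real.exp δ₂ ^ n := by
      simp only [w, hn0, if_false]
      rw [show (δ₂ * ((n:ℤ):ℝ)) = (n:ℕ) * δ₂ by push_cast; ring, Real.exp_nat_mul]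
    rw [hw]
    rw [pow_mul, div_pow, ← pow_mul]
    have hane : a ^ n ≠ 0 := pow_ne_zero _ ha0
    field_simp
    have hA : a ^ (n*2) * a⁻¹ ^ (n*2) = 1 := by rw [← mul_pow, mul_inv_cancel₀ ha0, one_pow]
    linear_combination (-(Real.exp δ₂ ^ (n*2) * (n:ℝ) ^ (j*2))) * hA

lemma F_neg (δ₁ δ₂ : ℝ) (lam : ℂ) (hlam : lam ≠ 0) (j : ℕ) (n : ℕ) :
    (w δ₁ δ₂ (-(n:ℤ)))^2 * (‖v lam j (-(n:ℤ))‖)^2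
      = (n:ℝ) ^ (2*j) * ((‖lam‖ / Real.exp δ₁)^2) ^ n := by
  set a := ‖lam‖ with ha
  have ha0 : a ≠ 0 := by simpa [ha] using hlam
  rw [abs_v, neg_neg, zpow_natCast,
    show ((-(n:ℤ) : ℤ) : ℝ) = -(n:ℝ) by push_cast; ring, abs_neg,
    abs_of_nonneg (Nat.cast_nonneg n)]
  have hn0 : (-(n:ℤ)) ≤ 0 := by omega
  have hw : w δ₁ δ₂ (-(n:ℤ)) = (Real.exp δ₁ ^ n)⁻¹ := by
    simp only [w, hn0, if_true, Int.cast_neg, Int.cast_natCast, mul_neg, Real.exp_neg]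
    rw [mul_comm δ₁ (n:ℝ), Real.exp_nat_mul]
  rw [hw]
  rw [pow_mul, div_pow, ← pow_mul]
  have hene : Real.exp δ₁ ^ n ≠ 0 := pow_ne_zero _ (Real.exp_ne_zero δ₁)
  field_simp
  rw [← ha]
  have hE : Real.exp δ₁ ^ (n*2) * (Real.exp δ₁)⁻¹ ^ (n*2) = 1 := by
    rw [← mul_pow, mul_inv_cancel₀ (Real.exp_ne_zero δ₁), one_pow]
  linear_combination (-((n:ℝ) ^ (j*2) * a ^ (n*2))) * hE

lemma summable_poly_geom {r : ℝ} (hr0 : 0 ≤ r) (hr : r < 1) (j : ℕ) :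
    Summable (fun n : ℕ => (n:ℝ) ^ (2*j) * r ^ n) := by
  have := summable_pow_mul_geometric_of_norm_lt_one (R := ℝ) (2*j)
    (r := r) (by rwa [Real.norm_eq_abs, abs_of_nonneg hr0])
  simpa using this

lemma v_mem_space (δ₁ δ₂ : ℝ) (lam : ℂ) (hlo : Real.exp δ₂ < ‖lam‖)
    (hhi : ‖lam‖ < Real.exp δ₁) (j : ℕ) : v lam j ∈ space δ₁ δ₂ := by
  set a := ‖lam‖ with ha
  have ha0 : (0:ℝ) < a := lt_trans (Real.exp_pos δ₂) hlo
  have hlam : lam ≠ 0 := by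
    intro h
    rw [ha, h, norm_zero] at ha0
    exact lt_irrefl 0 ha0
  have hr2 : (Real.exp δ₂ / a)^2 < 1 := by
    have h1 : Real.exp δ₂ / a < 1 := (div_lt_one ha0).mpr hlo
    have h0 : 0 ≤ Real.exp δ₂ / a := div_nonneg (Real.exp_pos δ₂).le ha0.le
    nlinarith
  have hr1 : (a / Real.exp δ₁)^2 < 1 := by
    have h1 : a / Real.exp δ₁ < 1 := (div_lt_one (Real.exp_pos δ₁)).mpr hhi
    have h0 : 0 ≤ a / Real.exp δ₁ := div_nonneg ha0.le (Real.exp_pos δ₁).le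
    nlinarith
  rw [mem_space_iff]
  apply Summable.of_nat_of_neg
  · exact ((summable_poly_geom (sq_nonneg _) hr2 j).congr
      fun n => (F_pos δ₁ δ₂ lam hlam j n).symm)
  · exact ((summable_poly_geom (sq_nonneg _) hr1 j).congr
      fun n => (F_neg δ₁ δ₂ lam hlam j n).symm)

lemma not_summable_geom {R c : ℝ} (hR : 1 < R) (hc : 0 < c) :
    ¬ Summable (fun n : ℕ => c * R ^ n) := by
  intro h
  have h1 := h.tendsto_atTop_zero
  have h2 : Filter.Tendsto (fun n : ℕ => c * R ^ n) Filter.atTop Filter.atTop :=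
    (tendsto_pow_atTop_atTop_of_one_lt hR).const_mul_atTop hc
  exact h2.not_tendsto (disjoint_nhds_atTop 0).symm h1


set_option maxHeartbeats 2000000 in
open WeightedL2 in
theorem main (δ₁ δ₂ : ℝ) (hδ : δ₂ < δ₁)
    (T : space δ₁ δ₂ →L[ℂ] space δ₁ δ₂)
    (hT : ∀ (x : space δ₁ δ₂) (k : ℤ), (T x : ℤ → ℂ) k = (x : ℤ → ℂ) (k - 1))
    (lam : ℂ) (h₁ : ‖lam‖ ≠ Real.exp δ₁) (h₂ : ‖lam‖ ≠ Real.exp δ₂)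
    (m : ℕ) (hm : 0 < m) :
    (Real.exp δ₂ < ‖lam‖ ∧ ‖lam‖ < Real.exp δ₁ →
      Module.finrank ℂ (LinearMap.ker (((T - lam • 1) ^ m : space δ₁ δ₂ →L[ℂ] space δ₁ δ₂) : space δ₁ δ₂ →ₗ[ℂ] space δ₁ δ₂)) = m) ∧
    (¬ (Real.exp δ₂ < ‖lam‖ ∧ ‖lam‖ < Real.exp δ₁) →
      LinearMap.ker (((T - lam • 1) ^ m : space δ₁ δ₂ →L[ℂ] space δ₁ δ₂) : space δ₁ δ₂ →ₗ[ℂ] space δ₁ δ₂) = ⊥) := by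
  classical
  have hstep : ∀ x : space δ₁ δ₂,
      (((T - lam • 1) x : space δ₁ δ₂) : ℤ → ℂ) = A lam (x : ℤ → ℂ) := by
    intro x
    have h1 : (T - lam • 1) x = T x - lam • x := by
      simp [ContinuousLinearMap.sub_apply]
    funext k
    rw [h1, A_apply]
    push_cast [Submodule.coe_sub, Submodule.coe_smul]
    rw [Pi.sub_apply, Pi.smul_apply, smul_eq_mul, hT x k]
  have hiter : ∀ (n : ℕ) (x : space δ₁ δ₂),
      ((((T - lam • 1) ^ n) x : space δ₁ δ₂) : ℤ → ℂ) = (A lam ^ n) (x : ℤ → ℂ) := by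
    intro n
    induction n with
    | zero => intro x; simp
    | succ n ih =>
      intro x
      rw [pow_succ, ContinuousLinearMap.mul_apply, ih ((T - lam • 1) x), hstep x,
        pow_succ, Module.End.mul_apply]
  have hker : ∀ x : space δ₁ δ₂,
      x ∈ LinearMap.ker (((T - lam • 1) ^ m : space δ₁ δ₂ →L[ℂ] space δ₁ δ₂) : space δ₁ δ₂ →ₗ[ℂ] space δ₁ δ₂) ↔ (A lam ^ m) (x : ℤ → ℂ) = 0 := by
    intro x
    rw [LinearMap.mem_ker]
    constructor
    · intro h
      rw [← hiter m x]
      show ((((T - lam • 1) ^ m) x : space δ₁ δ₂) : ℤ → ℂ) = 0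
      rw [show (((T - lam • 1) ^ m) x) = 0 from h]
      rfl
    · intro h
      have := hiter m x
      rw [h] at this
      exact Subtype.ext this
  constructor
  · -- annulus case
    rintro ⟨hlo, hhi⟩
    have ha0 : (0:ℝ) < ‖lam‖ := lt_trans (Real.exp_pos δ₂) hlo
    have hlam : lam ≠ 0 := by
      intro h
      rw [h, norm_zero] at ha0
      exact lt_irrefl 0 ha0
    set K := LinearMap.ker (((T - lam • 1) ^ m : space δ₁ δ₂ →L[ℂ] space δ₁ δ₂) : space δ₁ δ₂ →ₗ[ℂ] space δ₁ δ₂) with hK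
    let Φ : K →ₗ[ℂ] (Fin m → ℂ) :=
      { toFun := fun x => fun i => ((x : space δ₁ δ₂) : ℤ → ℂ) ((i : ℕ) : ℤ)
        map_add' := fun x y => rfl
        map_smul' := fun c x => rfl }
    let V : Fin m → K := fun j =>
      ⟨⟨v lam j, v_mem_space δ₁ δ₂ lam hlo hhi j⟩,
        (hker _).mpr (A_pow_v_of_lt lam hlam j.2)⟩
    let M : Matrix (Fin m) (Fin m) ℂ := fun i j => v lam (j : ℕ) (((i : ℕ) : ℤ))
    have hMdecomp : M = Matrix.diagonal (fun i : Fin m => lam ^ (-((i : ℕ) : ℤ))) *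
        Matrix.vandermonde (fun i : Fin m => ((i : ℕ) : ℂ)) := by
      funext i j
      rw [Matrix.diagonal_mul, Matrix.vandermonde_apply]
      show lam ^ (-((i:ℕ):ℤ)) * (((i:ℕ):ℤ):ℂ) ^ (j:ℕ) = _
      push_cast
      ring
    have hdet : M.det ≠ 0 := by
      rw [hMdecomp, Matrix.det_mul, Matrix.det_diagonal]
      apply mul_ne_zero
      · exact Finset.prod_ne_zero_iff.mpr fun i _ => zpow_ne_zero _ hlam
      · rw [Ne, Matrix.det_vandermonde_eq_zero_iff]
        rintro ⟨i, j, hij, hne⟩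
        apply hne
        apply Fin.ext
        exact_mod_cast hij
    have hinj : Function.Injective Φ := by
      rw [injective_iff_map_eq_zero]
      intro z hz
      have hA : (A lam ^ m) ((z : space δ₁ δ₂) : ℤ → ℂ) = 0 := (hker _).mp z.2
      have hwin : ∀ i : ℕ, i < m → ((z : space δ₁ δ₂) : ℤ → ℂ) i = 0 := by
        intro i hi
        have := congrFun hz ⟨i, hi⟩
        exact this
      have : ((z : space δ₁ δ₂) : ℤ → ℂ) = 0 := eq_zero_of_window lam hlam m _ hA hwin
      exact Subtype.ext (Subtype.ext this)
    have hsurj : Function.Surjective Φ := by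
      intro y
      refine ⟨∑ j, (M⁻¹.mulVec y) j • V j, ?_⟩
      have hΦ : Φ (∑ j, (M⁻¹.mulVec y) j • V j) = M.mulVec (M⁻¹.mulVec y) := by
        rw [map_sum]
        funext i
        rw [Finset.sum_apply]
        rw [Matrix.mulVec, dotProduct]
        apply Finset.sum_congr rfl
        intro j _
        rw [map_smul]
        show (M⁻¹.mulVec y) j * v lam (j:ℕ) (((i:ℕ):ℤ)) = M i j * (M⁻¹.mulVec y) j
        rw [mul_comm]
      rw [hΦ, Matrix.mulVec_mulVec, Matrix.mul_nonsing_inv _ (Ne.isUnit hdet),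
        Matrix.one_mulVec]
    have e : K ≃ₗ[ℂ] (Fin m → ℂ) := LinearEquiv.ofBijective Φ ⟨hinj, hsurj⟩
    rw [e.finrank_eq]
    exact Module.finrank_fin_fun ℂ
  · -- outside the annulus
    intro hout
    have houts : ‖lam‖ < Real.exp δ₂ ∨ Real.exp δ₁ < ‖lam‖ := by
      rcases lt_or_ge (‖lam‖) (Real.exp δ₂) with h | h
      · exact Or.inl h
      · right
        have hlo : Real.exp δ₂ < ‖lam‖ := lt_of_le_of_ne h (Ne.symm h₂)
        have : ¬ (‖lam‖ < Real.exp δ₁) := fun hh => hout ⟨hlo, hh⟩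
        exact lt_of_le_of_ne (le_of_not_gt this) (Ne.symm h₁)
    have hinj1 : ∀ x : space δ₁ δ₂, (T - lam • 1) x = 0 → x = 0 := by
      intro x hx
      have hA : A lam ((x : space δ₁ δ₂) : ℤ → ℂ) = 0 := by
        rw [← hstep x, hx]
        rfl
      have hrec : ∀ k : ℤ, (x : ℤ → ℂ) (k - 1) = lam * (x : ℤ → ℂ) k := by
        intro k
        have := congrFun hA k
        rw [A_apply] at this
        exact sub_eq_zero.mp this
      by_cases hlam : lam = 0
      · apply Subtype.ext
        funext k
        have := hrec (k + 1)
        rw [add_sub_cancel_right, hlam, zero_mul] at this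
        exact this
      · have hup : ∀ n : ℕ, (x : ℤ → ℂ) (n : ℤ) = lam ^ (-(n:ℤ)) * (x : ℤ → ℂ) 0 := by
          intro n
          induction n with
          | zero => simp
          | succ n ih =>
            have h' : (x : ℤ → ℂ) ((n:ℤ)) = lam * (x : ℤ → ℂ) ((n:ℤ) + 1) := by
              have := hrec ((n:ℤ) + 1)
              rwa [add_sub_cancel_right] at this
            have h2 : (x : ℤ → ℂ) ((n:ℤ) + 1) = lam⁻¹ * (x : ℤ → ℂ) (n:ℤ) := by
              rw [h']
              field_simp
            rw [show ((n + 1 : ℕ) : ℤ) = (n:ℤ) + 1 by push_cast; ring, h2, ih,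
              show (-((n:ℤ) + 1)) = (-(n:ℤ)) + (-1) by ring, zpow_add₀ hlam, zpow_neg_one]
            ring
        have hdn : ∀ n : ℕ, (x : ℤ → ℂ) (-(n:ℤ)) = lam ^ ((n:ℤ)) * (x : ℤ → ℂ) 0 := by
          intro n
          induction n with
          | zero => simp
          | succ n ih =>
            have h' := hrec (-(n:ℤ))
            rw [show (-((n + 1 : ℕ):ℤ)) = -(n:ℤ) - 1 by push_cast; ring, h', ih,
              show (((n + 1 : ℕ)):ℤ) = (n:ℤ) + 1 by push_cast; ring, zpow_add₀ hlam, zpow_one]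
            ring
        by_cases hx0 : (x : ℤ → ℂ) 0 = 0
        · apply Subtype.ext
          funext k
          rcases le_or_gt 0 k with h | h
          · have hk : k = ((k.toNat : ℕ) : ℤ) := (Int.toNat_of_nonneg h).symm
            rw [hk, hup, hx0, mul_zero]
            rfl
          · have hk : k = -(((-k).toNat : ℕ) : ℤ) := by omega
            rw [hk, hdn, hx0, mul_zero]
            rfl
        · exfalso
          have hsum := (mem_space_iff δ₁ δ₂ (x : ℤ → ℂ)).mp x.2
          have hc : (0:ℝ) < ‖(x : ℤ → ℂ) 0‖ ^ 2 :=
            pow_pos (norm_pos_iff.mpr hx0) 2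
          have ha0 : (0:ℝ) < ‖lam‖ := norm_pos_iff.mpr hlam
          rcases houts with hlt | hgt
          · -- |lam| < exp δ₂ : positive side blows up
            have h1 : Summable (fun n : ℕ =>
                (w δ₁ δ₂ (n:ℤ))^2 * (‖(x : ℤ → ℂ) (n:ℤ)‖)^2) :=
              hsum.comp_injective (fun a b h => by exact_mod_cast h)
            have hR : 1 < (Real.exp δ₂ / ‖lam‖)^2 := by
              have : 1 < Real.exp δ₂ / ‖lam‖ := (one_lt_div ha0).mpr hlt
              nlinarith
            apply not_summable_geom hR hc
            apply h1.congr
            intro n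
            have hvx : ‖(x : ℤ → ℂ) (n:ℤ)‖ ^ 2
                = ‖v lam 0 (n:ℤ)‖ ^ 2 * ‖(x : ℤ → ℂ) 0‖ ^ 2 := by
              rw [hup n]
              rw [norm_mul, mul_pow]
              congr 2
              simp [v]
            have hF := F_pos δ₁ δ₂ lam hlam 0 n
            rw [mul_zero, pow_zero, one_mul] at hF
            rw [hvx, ← mul_assoc, hF]
            ring
          · -- exp δ₁ < |lam| : negative side blows up
            have h1 : Summable (fun n : ℕ =>
                (w δ₁ δ₂ (-(n:ℤ)))^2 * (‖(x : ℤ → ℂ) (-(n:ℤ))‖)^2) :=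
              hsum.comp_injective (fun a b h => by
                have := neg_injective h
                exact_mod_cast this)
            have hR : 1 < (‖lam‖ / Real.exp δ₁)^2 := by
              have : 1 < ‖lam‖ / Real.exp δ₁ :=
                (one_lt_div (Real.exp_pos δ₁)).mpr hgt
              nlinarith
            apply not_summable_geom hR hc
            apply h1.congr
            intro n
            have hvx : ‖(x : ℤ → ℂ) (-(n:ℤ))‖ ^ 2
                = ‖v lam 0 (-(n:ℤ))‖ ^ 2 * ‖(x : ℤ → ℂ) 0‖ ^ 2 := by
              rw [hdn n]
              rw [norm_mul, mul_pow]
              congr 2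
              simp [v]
            have hF := F_neg δ₁ δ₂ lam hlam 0 n
            rw [mul_zero, pow_zero, one_mul] at hF
            rw [hvx, ← mul_assoc, hF]
            ring
    have hinjn : ∀ (n : ℕ) (x : space δ₁ δ₂), ((T - lam • 1) ^ n) x = 0 → x = 0 := by
      intro n
      induction n with
      | zero =>
        intro x hx
        rw [pow_zero, ContinuousLinearMap.one_apply] at hx
        exact hx
      | succ n ih =>
        intro x hx
        rw [pow_succ, ContinuousLinearMap.mul_apply] at hx
        exact hinj1 x (ih _ hx)
    exact LinearMap.ker_eq_bot'.mpr (hinjn m)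


end ShiftKerAux
open WeightedL2 in
/-- Assume `δ₂ < δ₁` and let `λ` be a complex number with `|λ|` different
from `e^{δ₁}` and from `e^{δ₂}`. For every positive integer `m`, the kernel of
`(T − λI)^m` on `ℓ²_{δ₁,δ₂}` has complex dimension `m` if `e^{δ₂} < |λ| < e^{δ₁}`,
and is zero otherwise. -/
theorem finrank_ker_shift_sub_smul_id_pow (δ₁ δ₂ : ℝ) (hδ : δ₂ < δ₁)
    (T : space δ₁ δ₂ →L[ℂ] space δ₁ δ₂)
    (hT : ∀ (x : space δ₁ δ₂) (k : ℤ), (T x : ℤ → ℂ) k = (x : ℤ → ℂ) (k - 1))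
    (lam : ℂ) (h₁ : ‖lam‖ ≠ Real.exp δ₁) (h₂ : ‖lam‖ ≠ Real.exp δ₂)
    (m : ℕ) (hm : 0 < m) :
    (Real.exp δ₂ < ‖lam‖ ∧ ‖lam‖ < Real.exp δ₁ →
      Module.finrank ℂ (LinearMap.ker (((T - lam • 1) ^ m : space δ₁ δ₂ →L[ℂ] space δ₁ δ₂) : space δ₁ δ₂ →ₗ[ℂ] space δ₁ δ₂)) = m) ∧
    (¬ (Real.exp δ₂ < ‖lam‖ ∧ ‖lam‖ < Real.exp δ₁) →
      LinearMap.ker (((T - lam • 1) ^ m : space δ₁ δ₂ →L[ℂ] space δ₁ δ₂) : space δ₁ δ₂ →ₗ[ℂ] space δ₁ δ₂) = ⊥) := by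
  exact ShiftKerAux.main δ₁ δ₂ hδ T hT lam h₁ h₂ m hm
end
end

section
/- Assume δ₂ < δ₁ and let λ be a complex number with e^{δ₂} < |λ| < e^{δ₁}. For every positive integer m, the kernel of (T − λI)^m on ℓ²_{δ₁,δ₂} consists exactly of the sequences of the form k ↦ q(k)·λ^{-k}, where q ranges over complex polynomials of degree less than m. -/
noncomputable section

section Aux
open Polynomial

lemma withBotNat_lt_succ_iff {a : WithBot ℕ} {n : ℕ} :
    a < ((n + 1 : ℕ) : WithBot ℕ) ↔ a ≤ (n : WithBot ℕ) := by
  cases a with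
  | bot =>
    refine ⟨fun _ => bot_le, fun _ => ?_⟩
    exact_mod_cast WithBot.bot_lt_coe (n + 1)
  | coe k =>
    rw [Nat.cast_withBot, Nat.cast_withBot, WithBot.coe_lt_coe, WithBot.coe_le_coe]
    exact Nat.lt_succ_iff

lemma exists_discrete_antideriv :
    ∀ (N : ℕ) (r : Polynomial ℂ), r.natDegree ≤ N →
      ∃ Q : Polynomial ℂ, Q.degree ≤ r.degree + 1 ∧
        ∀ z : ℂ, Q.eval z - Q.eval (z - 1) = r.eval z := by
  intro N
  induction N with
  | zero =>
    intro r hr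
    obtain ⟨c, rfl⟩ := natDegree_eq_zero.mp (Nat.le_zero.mp hr)
    refine ⟨C c * X, ?_, fun z => by simp; ring⟩
    calc (C c * X).degree ≤ (C c).degree + X.degree := degree_mul_le _ _
      _ = (C c).degree + 1 := by rw [degree_X]
  | succ N IH =>
    intro r hr
    by_cases hN : r.natDegree ≤ N
    · obtain ⟨Q, h1, h2⟩ := IH r hN
      exact ⟨Q, h1, h2⟩
    have hn : r.natDegree = N + 1 := le_antisymm hr (not_le.mp hN)
    have hr0 : r ≠ 0 := fun h => by simp [h] at hn
    set n : ℕ := N + 1 with hndef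
    have hdegr : r.degree = (n : ℕ) := by rw [degree_eq_natDegree hr0, hn]
    set a : ℂ := r.leadingCoeff with ha
    have ha0 : a ≠ 0 := leadingCoeff_ne_zero.mpr hr0
    have hn1 : ((n : ℂ) + 1) ≠ 0 := Nat.cast_add_one_ne_zero n
    set Q₀ : Polynomial ℂ := C (a / (n + 1)) * X ^ (n + 1) with hQ₀
    set D₀ : Polynomial ℂ := C (a / (n + 1)) * (X ^ (n + 1) - (X - C 1) ^ (n + 1)) with hD₀
    have hD₀eval : ∀ z : ℂ, D₀.eval z = Q₀.eval z - Q₀.eval (z - 1) := by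
      intro z; simp [hD₀, hQ₀]; ring
    have hmonic : ((X : Polynomial ℂ) - C 1).Monic := monic_X_sub_C 1
    have hdq : (((X : Polynomial ℂ) - C 1) ^ (n + 1)).degree = ((n + 1 : ℕ) : WithBot ℕ) := by
      rw [degree_pow, degree_X_sub_C]; simp
    -- the difference polynomial has degree ≤ n
    have hdiffdeg : ((X : Polynomial ℂ) ^ (n + 1) - (X - C 1) ^ (n + 1)).degree
        ≤ (n : WithBot ℕ) := by
      rw [← withBotNat_lt_succ_iff]
      refine lt_of_lt_of_eq (degree_sub_lt ?_ (pow_ne_zero _ X_ne_zero) ?_) ?_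
      · rw [degree_X_pow, hdq]
      · rw [(monic_X_pow _).leadingCoeff, (hmonic.pow _).leadingCoeff]
      · rw [degree_X_pow]
    -- its coefficient at n is n+1
    have hdiffcoeff : ((X : Polynomial ℂ) ^ (n + 1) - (X - C 1) ^ (n + 1)).coeff n
        = (n : ℂ) + 1 := by
      have h1 : ((X : Polynomial ℂ) - C 1) = X + C (-1) := by rw [map_neg, sub_eq_add_neg]
      rw [coeff_sub, coeff_X_pow, h1, coeff_X_add_C_pow]
      simp [Nat.choose_succ_self_right]
    have hD₀deg : D₀.degree ≤ (n : WithBot ℕ) := by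
      calc D₀.degree ≤ (C (a / (n + 1))).degree
            + ((X : Polynomial ℂ) ^ (n + 1) - (X - C 1) ^ (n + 1)).degree := degree_mul_le _ _
        _ ≤ 0 + (n : WithBot ℕ) := add_le_add degree_C_le hdiffdeg
        _ = (n : WithBot ℕ) := zero_add _
    have hD₀coeff : D₀.coeff n = a := by
      rw [hD₀, coeff_C_mul, hdiffcoeff, div_mul_cancel₀ _ hn1]
    set s : Polynomial ℂ := r - D₀ with hs
    have hra : r.coeff n = a := by rw [ha, leadingCoeff, hn]
    have hscoeff : s.coeff n = 0 := by
      rw [hs, coeff_sub, hD₀coeff, hra, sub_self]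
    have hsle : s.degree ≤ (n : WithBot ℕ) := by
      rw [hs]; exact le_trans (degree_sub_le _ _) (max_le (le_of_eq hdegr) hD₀deg)
    have hsdeg : s.degree < (n : WithBot ℕ) := by
      rcases lt_or_eq_of_le hsle with h | h
      · exact h
      · exfalso
        have hs0 : s ≠ 0 := fun h0 => by rw [h0] at h; simp at h
        have : s.coeff n = s.leadingCoeff := by
          rw [leadingCoeff, natDegree_eq_of_degree_eq_some h]
        rw [hscoeff] at this
        exact (leadingCoeff_ne_zero.mpr hs0) this.symm
    have hsnat : s.natDegree ≤ N := by
      by_cases hs0 : s = 0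
      · simp [hs0]
      · have := (natDegree_lt_iff_degree_lt hs0).mpr hsdeg
        omega
    obtain ⟨Q₁, hQ₁d, hQ₁e⟩ := IH s hsnat
    refine ⟨Q₀ + Q₁, ?_, ?_⟩
    · refine le_trans (degree_add_le _ _) (max_le ?_ ?_)
      · calc Q₀.degree ≤ (C (a / (n + 1))).degree + ((X : Polynomial ℂ) ^ (n + 1)).degree :=
              degree_mul_le _ _
          _ ≤ 0 + ((n + 1 : ℕ) : WithBot ℕ) := add_le_add degree_C_le (le_of_eq (degree_X_pow _))
          _ = ((n + 1 : ℕ) : WithBot ℕ) := zero_add _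
          _ = r.degree + 1 := by rw [hdegr]; push_cast; rfl
      · calc Q₁.degree ≤ s.degree + 1 := hQ₁d
          _ ≤ (n : WithBot ℕ) + 1 := add_le_add_left (le_of_lt hsdeg) 1
          _ = r.degree + 1 := by rw [hdegr]
    · intro z
      have h1 := hQ₁e z
      have h2 := hD₀eval z
      have h3 : s.eval z = r.eval z - D₀.eval z := by rw [hs, eval_sub]
      simp only [eval_add]
      linear_combination h1 + h3 - h2

end Aux


open WeightedL2 in
/-- Assume `δ₂ < δ₁` and let `λ` be a complex number with
`e^{δ₂} < |λ| < e^{δ₁}`. For every positive integer `m`, the kernel of `(T − λI)^m`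
on `ℓ²_{δ₁,δ₂}` consists exactly of the sequences of the form `k ↦ q(k)·λ^{-k}`,
where `q` ranges over complex polynomials of degree less than `m`. -/
theorem mem_ker_shift_sub_smul_id_pow_iff (δ₁ δ₂ : ℝ) (hδ : δ₂ < δ₁)
    (T : space δ₁ δ₂ →L[ℂ] space δ₁ δ₂)
    (hT : ∀ (x : space δ₁ δ₂) (k : ℤ), (T x : ℤ → ℂ) k = (x : ℤ → ℂ) (k - 1))
    (lam : ℂ) (h₁ : Real.exp δ₂ < ‖lam‖) (h₂ : ‖lam‖ < Real.exp δ₁)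
    (m : ℕ) (hm : 0 < m) :
    ∀ x : space δ₁ δ₂, x ∈ LinearMap.ker (((T - lam • 1) ^ m : space δ₁ δ₂ →L[ℂ] space δ₁ δ₂) :
      space δ₁ δ₂ →ₗ[ℂ] space δ₁ δ₂) ↔
      ∃ q : Polynomial ℂ, q.degree < (m : ℕ) ∧
        ∀ k : ℤ, (x : ℤ → ℂ) k = q.eval (k : ℂ) * lam ^ (-k) := by

  classical
  have hlam0 : lam ≠ 0 := by
    intro h
    rw [h] at h₁
    simp at h₁
    exact absurd h₁ (not_lt.mpr (Real.exp_pos δ₂).le)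
  set S : space δ₁ δ₂ →L[ℂ] space δ₁ δ₂ := T - lam • 1 with hSdef
  have hS : ∀ (y : space δ₁ δ₂) (k : ℤ),
      (S y : ℤ → ℂ) k = (y : ℤ → ℂ) (k - 1) - lam * (y : ℤ → ℂ) k := by
    intro y k
    have h0 : S y = T y - lam • y := by
      rw [hSdef]
      simp [ContinuousLinearMap.sub_apply, ContinuousLinearMap.smul_apply,
        ContinuousLinearMap.one_apply]
    rw [h0]
    simp [hT y k, smul_eq_mul]
  -- Direction ⇐ : polynomial sequences are in the kernel
  have dir2 : ∀ (n : ℕ) (q : Polynomial ℂ) (y : space δ₁ δ₂),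
      q.degree < (n : ℕ) → (∀ k : ℤ, (y : ℤ → ℂ) k = q.eval (k : ℂ) * lam ^ (-k)) →
      (S ^ n) y = 0 := by
    intro n
    induction n with
    | zero =>
      intro q y hq hy
      have hq0 : q = 0 := Polynomial.degree_eq_bot.mp (Nat.WithBot.lt_zero_iff.mp
        (by exact_mod_cast hq))
      have hy0 : y = 0 := by
        apply Subtype.ext
        funext k
        have := hy k
        rw [hq0] at this
        simpa using this
      rw [pow_zero, ContinuousLinearMap.one_apply, hy0]
    | succ n IH =>
      intro q y hq hy
      rw [pow_succ, ContinuousLinearMap.mul_apply]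
      set p : Polynomial ℂ :=
        Polynomial.C lam * (q.comp (Polynomial.X - Polynomial.C 1) - q) with hp
      have key : ∀ k : ℤ, (S y : ℤ → ℂ) k = p.eval (k : ℂ) * lam ^ (-k) := by
        intro k
        have e1 : lam ^ (-(k - 1)) = lam * lam ^ (-k) := by
          rw [show -(k - 1) = 1 + -k by ring, zpow_add₀ hlam0, zpow_one]
        rw [hS y k, hy (k - 1), hy k, hp]
        push_cast
        simp only [Polynomial.eval_mul, Polynomial.eval_C, Polynomial.eval_sub,
          Polynomial.eval_comp, Polynomial.eval_X, Polynomial.eval_one]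
        rw [e1]
        ring
      have hqn : q.degree ≤ (n : WithBot ℕ) := withBotNat_lt_succ_iff.mp hq
      have hdp : p.degree < ((n : ℕ) : WithBot ℕ) := by
        by_cases hq0 : q.degree ≤ 0
        · have hqC : q = Polynomial.C (q.coeff 0) := Polynomial.eq_C_of_degree_le_zero hq0
          have hp0 : p = 0 := by
            rw [hp, hqC]
            simp
          rw [hp0, Polynomial.degree_zero]
          exact_mod_cast WithBot.bot_lt_coe n
        · have hqne : q ≠ 0 := by
            intro h
            rw [h, Polynomial.degree_zero] at hq0
            exact hq0 bot_le
          have hc1 : ((Polynomial.X : Polynomial ℂ) - Polynomial.C 1).natDegree = 1 :=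
            Polynomial.natDegree_X_sub_C 1
          have hlc : (q.comp (Polynomial.X - Polynomial.C 1)).leadingCoeff = q.leadingCoeff := by
            rw [Polynomial.leadingCoeff_comp (by rw [hc1]; exact one_ne_zero),
              (Polynomial.monic_X_sub_C (1 : ℂ)).leadingCoeff, one_pow, mul_one]
          have hcomp0 : q.comp (Polynomial.X - Polynomial.C 1) ≠ 0 := by
            intro h
            apply Polynomial.leadingCoeff_ne_zero.mpr hqne
            rw [← hlc, h, Polynomial.leadingCoeff_zero]
          have hdc : (q.comp (Polynomial.X - Polynomial.C 1)).degree = q.degree := by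
            rw [Polynomial.degree_eq_natDegree hcomp0, Polynomial.degree_eq_natDegree hqne,
              Polynomial.natDegree_comp, hc1, mul_one]
          have h5 : (q.comp (Polynomial.X - Polynomial.C 1) - q).degree < q.degree := by
            have := Polynomial.degree_sub_lt hdc hcomp0 hlc
            rwa [hdc] at this
          calc p.degree ≤ (Polynomial.C lam).degree
                + (q.comp (Polynomial.X - Polynomial.C 1) - q).degree :=
                  Polynomial.degree_mul_le _ _
            _ ≤ 0 + (q.comp (Polynomial.X - Polynomial.C 1) - q).degree :=
                  add_le_add_left Polynomial.degree_C_le _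
            _ = (q.comp (Polynomial.X - Polynomial.C 1) - q).degree := zero_add _
            _ < q.degree := h5
            _ ≤ (n : WithBot ℕ) := hqn
      exact IH p (S y) hdp key
  -- Direction ⇒ : kernel elements are polynomial sequences
  have dir1 : ∀ (n : ℕ) (y : space δ₁ δ₂), (S ^ n) y = 0 →
      ∃ q : Polynomial ℂ, q.degree < (n : ℕ) ∧
        ∀ k : ℤ, (y : ℤ → ℂ) k = q.eval (k : ℂ) * lam ^ (-k) := by
    intro n
    induction n with
    | zero =>
      intro y hy
      have hy0 : y = 0 := by rwa [pow_zero, ContinuousLinearMap.one_apply] at hy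
      refine ⟨0, by rw [Polynomial.degree_zero]; exact_mod_cast WithBot.bot_lt_coe 0,
        fun k => ?_⟩
      rw [hy0]
      simp
    | succ n IH =>
      intro y hy
      have hy' : (S ^ n) (S y) = 0 := by
        rw [← ContinuousLinearMap.mul_apply, ← pow_succ]
        exact hy
      obtain ⟨p, hpd, hpe⟩ := IH (S y) hy'
      set r : Polynomial ℂ := Polynomial.C (-lam⁻¹) * p with hrdef
      have hrec : ∀ k : ℤ, (y : ℤ → ℂ) k * lam ^ k - (y : ℤ → ℂ) (k - 1) * lam ^ (k - 1)
          = r.eval (k : ℂ) := by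
        intro k
        have h3 : (y : ℤ → ℂ) (k - 1) - lam * (y : ℤ → ℂ) k = p.eval (k : ℂ) * lam ^ (-k) :=
          (hS y k).symm.trans (hpe k)
        have e5 : lam ^ (-k) * lam ^ (k - 1) = lam⁻¹ := by
          rw [← zpow_add₀ hlam0, show -k + (k - 1) = -1 by ring, zpow_neg_one]
        have e6 : lam ^ k = lam * lam ^ (k - 1) := by
          rw [show k = 1 + (k - 1) by ring]
          rw [zpow_add₀ hlam0, zpow_one]
          ring_nf
        have h4 : (y : ℤ → ℂ) (k - 1) * lam ^ (k - 1) - (y : ℤ → ℂ) k * lam ^ k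
            = p.eval (k : ℂ) * lam⁻¹ := by
          calc (y : ℤ → ℂ) (k - 1) * lam ^ (k - 1) - (y : ℤ → ℂ) k * lam ^ k
              = ((y : ℤ → ℂ) (k - 1) - lam * (y : ℤ → ℂ) k) * lam ^ (k - 1) := by
                rw [e6]; ring
            _ = (p.eval (k : ℂ) * lam ^ (-k)) * lam ^ (k - 1) := by rw [h3]
            _ = p.eval (k : ℂ) * (lam ^ (-k) * lam ^ (k - 1)) := by ring
            _ = p.eval (k : ℂ) * lam⁻¹ := by rw [e5]
        rw [hrdef, Polynomial.eval_mul, Polynomial.eval_C]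
        linear_combination -h4
      obtain ⟨Q, hQd, hQe⟩ := exists_discrete_antideriv r.natDegree r le_rfl
      set d : ℂ := (y : ℤ → ℂ) 0 * lam ^ (0 : ℤ) - Q.eval 0 with hd
      have hck : ∀ k : ℤ, (y : ℤ → ℂ) k * lam ^ k = Q.eval (k : ℂ) + d := by
        intro k
        induction k using Int.induction_on with
        | zero => rw [hd]; push_cast; ring
        | succ i ih =>
          have h1 := hrec ((i : ℤ) + 1)
          have h2 := hQe ((i : ℂ) + 1)
          rw [show (i : ℤ) + 1 - 1 = (i : ℤ) by ring] at h1
          rw [show (i : ℂ) + 1 - 1 = (i : ℂ) by ring] at h2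
          push_cast at h1 ⊢
          linear_combination h1 + ih - h2
        | pred i ih =>
          have h1 := hrec (-(i : ℤ))
          have h2 := hQe (-(i : ℂ))
          rw [show -(i : ℤ) - 1 = -(i : ℤ) - 1 from rfl] at h1
          rw [show -(i : ℂ) - 1 = -(i : ℂ) - 1 from rfl] at h2
          push_cast at h1 h2 ih ⊢
          linear_combination ih - h1 + h2
      refine ⟨Q + Polynomial.C d, ?_, ?_⟩
      · have hrd : r.degree ≤ p.degree := by
          calc r.degree ≤ (Polynomial.C (-lam⁻¹)).degree + p.degree :=
                Polynomial.degree_mul_le _ _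
            _ ≤ 0 + p.degree := add_le_add_left Polynomial.degree_C_le _
            _ = p.degree := zero_add _
        have hQdeg : Q.degree ≤ (n : WithBot ℕ) :=
          le_trans hQd (le_trans (add_le_add_left hrd 1) (Nat.WithBot.add_one_le_of_lt hpd))
        refine lt_of_le_of_lt (Polynomial.degree_add_le _ _) (max_lt ?_ ?_)
        · refine lt_of_le_of_lt hQdeg ?_
          exact_mod_cast Nat.lt_succ_self n
        · refine lt_of_le_of_lt (Polynomial.degree_C_le) ?_
          exact_mod_cast Nat.succ_pos n
      · intro k
        have hk1 : lam ^ k * lam ^ (-k) = 1 := by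
          rw [← zpow_add₀ hlam0]
          simp
        calc (y : ℤ → ℂ) k = ((y : ℤ → ℂ) k * lam ^ k) * lam ^ (-k) := by
              rw [mul_assoc, hk1, mul_one]
          _ = (Q.eval (k : ℂ) + d) * lam ^ (-k) := by rw [hck k]
          _ = (Q + Polynomial.C d).eval (k : ℂ) * lam ^ (-k) := by
              rw [Polynomial.eval_add, Polynomial.eval_C]
  intro x
  rw [LinearMap.mem_ker]
  constructor
  · exact dir1 m x
  · rintro ⟨q, hq, hxq⟩
    exact dir2 m q x hq hxq
end
end

section
/- Assume δ₂ ≤ δ₁ and let λ be a complex number with |λ| different from e^{δ₁} and from e^{δ₂}. Then every finitely supported sequence x : ℤ → ℂ lies in the range of the operator T − λI on ℓ²_{δ₁,δ₂}. -/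
noncomputable section

namespace ShiftAux

open WeightedL2

lemma exp_mul_int (δ : ℝ) (k : ℤ) : Real.exp (δ * k) = Real.exp δ ^ k := by
  rw [← Real.rpow_intCast (Real.exp δ) k, Real.rpow_def_of_pos (Real.exp_pos δ),
    Real.log_exp]

lemma summable_right (C r : ℝ) (hr0 : 0 ≤ r) (hr1 : r < 1) (n : ℤ) :
    Summable (fun k : ℤ => if n ≤ k then C * r ^ (k - n).toNat else 0) := by
  have hinj : Function.Injective (fun m : ℕ => n + (m : ℤ)) := by
    intro a b h; simpa using h
  rw [← Function.Injective.summable_iff hinj]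
  · have : ((fun k : ℤ => if n ≤ k then C * r ^ (k - n).toNat else 0) ∘
        fun m : ℕ => n + (m : ℤ)) = fun m : ℕ => C * r ^ m := by
      funext m
      simp only [Function.comp_apply, add_sub_cancel_left, Int.toNat_natCast,
        if_pos (by omega : n ≤ n + (m : ℤ))]
    rw [this]
    exact (summable_geometric_of_lt_one hr0 hr1).mul_left C
  · intro k hk
    have : ¬ n ≤ k := by
      intro h
      exact hk ⟨(k - n).toNat, by simp; omega⟩
    simp [this]

lemma summable_left (C r : ℝ) (hr0 : 0 ≤ r) (hr1 : r < 1) (n : ℤ) :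
    Summable (fun k : ℤ => if k ≤ n then C * r ^ (n - k).toNat else 0) := by
  have hinj : Function.Injective (fun m : ℕ => n - (m : ℤ)) := by
    intro a b h; simp at h; omega
  rw [← Function.Injective.summable_iff hinj]
  · have : ((fun k : ℤ => if k ≤ n then C * r ^ (n - k).toNat else 0) ∘
        fun m : ℕ => n - (m : ℤ)) = fun m : ℕ => C * r ^ m := by
      funext m
      simp only [Function.comp_apply, sub_sub_cancel, Int.toNat_natCast,
        if_pos (by omega : n - (m : ℤ) ≤ n)]
    rw [this]
    exact (summable_geometric_of_lt_one hr0 hr1).mul_left C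
  · intro k hk
    have : ¬ k ≤ n := by
      intro h
      exact hk ⟨(n - k).toNat, by simp; omega⟩
    simp [this]

lemma w_le_two (δ₁ δ₂ : ℝ) (hδ : δ₂ ≤ δ₁) (k : ℤ) :
    w δ₁ δ₂ k ≤ Real.exp δ₂ ^ k := by
  rw [← exp_mul_int]
  unfold w; split
  · rename_i h
    have hk : (k:ℝ) ≤ 0 := by exact_mod_cast h
    exact Real.exp_le_exp.2 (by nlinarith)
  · exact le_refl _

lemma w_le_one (δ₁ δ₂ : ℝ) (hδ : δ₂ ≤ δ₁) (k : ℤ) :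
    w δ₁ δ₂ k ≤ Real.exp δ₁ ^ k := by
  rw [← exp_mul_int]
  unfold w; split
  · exact le_refl _
  · rename_i h
    have hk : (0:ℝ) ≤ (k:ℝ) := by exact_mod_cast (by omega : (0:ℤ) ≤ k)
    exact Real.exp_le_exp.2 (by nlinarith)

lemma mem_space_of_bound (δ₁ δ₂ : ℝ) (x : ℤ → ℂ) (g : ℤ → ℝ) (hg : Summable g)
    (hb : ∀ k, (w δ₁ δ₂ k * ‖x k‖) ^ 2 ≤ g k) : x ∈ space δ₁ δ₂ := by
  apply memℓp_gen
  have h2 : (2 : ENNReal).toReal = 2 := by norm_num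
  rw [h2]
  apply Summable.of_nonneg_of_le (fun k => by positivity) _ hg
  intro k
  have : ‖(wmul δ₁ δ₂ x) k‖ = w δ₁ δ₂ k * ‖x k‖ := by
    simp [wmul, map_mul, abs_of_pos (w_pos δ₁ δ₂ k)]
  rw [this]
  exact_mod_cast hb k

lemma single_mem_range (δ₁ δ₂ : ℝ) (hδ : δ₂ ≤ δ₁)
    (T : space δ₁ δ₂ →L[ℂ] space δ₁ δ₂)
    (hT : ∀ (x : space δ₁ δ₂) (k : ℤ), (T x : ℤ → ℂ) k = (x : ℤ → ℂ) (k - 1))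
    (lam : ℂ) (h₁ : ‖lam‖ ≠ Real.exp δ₁) (h₂ : ‖lam‖ ≠ Real.exp δ₂)
    (n : ℤ) (z : space δ₁ δ₂) (hz : (z : ℤ → ℂ) = Pi.single n 1) :
    z ∈ LinearMap.range ((T - lam • 1 : space δ₁ δ₂ →L[ℂ] space δ₁ δ₂) : space δ₁ δ₂ →ₗ[ℂ] space δ₁ δ₂) := by
  set b : ℝ := ‖lam‖ with hb
  have hbnn : 0 ≤ b := norm_nonneg lam
  -- produce, in each case, a function y in the space solving the recurrence
  suffices h : ∃ y : ℤ → ℂ, ∃ hy : y ∈ space δ₁ δ₂,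
      ∀ k, y (k - 1) - lam * y k = (Pi.single n 1 : ℤ → ℂ) k by
    obtain ⟨y, hy, hrec⟩ := h
    refine ⟨⟨y, hy⟩, ?_⟩
    apply Subtype.coe_injective
    show (((T - lam • 1 : space δ₁ δ₂ →L[ℂ] space δ₁ δ₂) ⟨y, hy⟩ : space δ₁ δ₂) : ℤ → ℂ) = (z : ℤ → ℂ)
    rw [hz]
    have hco : ((((T - lam • 1 : space δ₁ δ₂ →L[ℂ] space δ₁ δ₂) ⟨y, hy⟩ : space δ₁ δ₂)) : ℤ → ℂ)
        = fun k => y (k - 1) - lam * y k := by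
      funext k
      rw [ContinuousLinearMap.sub_apply, ContinuousLinearMap.smul_apply,
        ContinuousLinearMap.one_apply]
      have : (((T ⟨y, hy⟩ - lam • (⟨y, hy⟩ : space δ₁ δ₂)) : space δ₁ δ₂) : ℤ → ℂ) k
          = (T ⟨y, hy⟩ : ℤ → ℂ) k - lam * y k := by
        simp
      rw [this, hT]
    rw [hco]
    funext k
    exact hrec k
  rcases h₂.lt_or_gt with hlt2 | hgt
  · -- |lam| < e^{δ₂} ≤ e^{δ₁} : backward solution supported on k ≤ n - 1
    have hlt : b < Real.exp δ₁ := lt_of_lt_of_le hlt2 (Real.exp_le_exp.2 hδ)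
    set a : ℝ := Real.exp δ₁ with ha
    have ha0 : 0 < a := Real.exp_pos _
    have hane : a ≠ 0 := ha0.ne'
    refine ⟨fun k => if k ≤ n - 1 then lam ^ (n - 1 - k).toNat else 0, ?_, ?_⟩
    · apply mem_space_of_bound δ₁ δ₂ _
        (fun k => if k ≤ n - 1 then ((a ^ (n-1) : ℝ) ^ 2) * (((b / a) ^ 2) ^ (n - 1 - k).toNat) else 0)
      · exact summable_left _ _ (by positivity) (by
          have : b / a < 1 := (div_lt_one ha0).2 hlt
          nlinarith [div_nonneg hbnn ha0.le]) (n - 1)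
      · intro k
        beta_reduce
        by_cases hk : k ≤ n - 1
        · rw [if_pos hk, if_pos hk]
          set m : ℕ := (n - 1 - k).toNat with hm
          have hkm : k = (n - 1) - (m : ℤ) := by omega
          rw [norm_pow]
          have hw : w δ₁ δ₂ k ≤ a ^ k := w_le_one δ₁ δ₂ hδ k
          have hwpos := w_pos δ₁ δ₂ k
          have key : (a ^ k * b ^ m) ^ 2 = ((a ^ (n-1) : ℝ) ^ 2) * (((b / a) ^ 2) ^ m) := by
            have hak : a ^ k = a ^ (n-1) * (a⁻¹) ^ m := by
              rw [hkm, zpow_sub₀ hane, zpow_natCast, inv_pow, div_eq_mul_inv]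
            rw [hak]
            field_simp
            ring
          calc (w δ₁ δ₂ k * b ^ m) ^ 2 ≤ (a ^ k * b ^ m) ^ 2 := by
                have h1 : 0 ≤ w δ₁ δ₂ k * b ^ m := by positivity
                have h2 : w δ₁ δ₂ k * b ^ m ≤ a ^ k * b ^ m :=
                  mul_le_mul_of_nonneg_right hw (by positivity)
                nlinarith
            _ = _ := key
        · rw [if_neg hk, if_neg hk]
          simp
    · intro k
      beta_reduce
      rcases lt_trichotomy k n with hkn | hkn | hkn
      · -- k < n : telescoping
        have hk1 : k - 1 ≤ n - 1 := by omega
        have hk2 : k ≤ n - 1 := by omega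
        have hnat : (n - 1 - (k - 1)).toNat = (n - 1 - k).toNat + 1 := by omega
        rw [if_pos hk1, if_pos hk2, hnat, pow_succ]
        rw [Pi.single_apply, if_neg (by omega : k ≠ n)]
        ring
      · subst hkn
        rw [if_pos (by omega : k - 1 ≤ k - 1), if_neg (by omega : ¬ k ≤ k - 1)]
        simp
      · rw [if_neg (by omega : ¬ k - 1 ≤ n - 1), if_neg (by omega : ¬ k ≤ n - 1)]
        rw [Pi.single_apply, if_neg (by omega : k ≠ n)]
        ring
  · -- |lam| > e^{δ₂} : forward solution supported on k ≥ n
    set a : ℝ := Real.exp δ₂ with ha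
    have ha0 : 0 < a := Real.exp_pos _
    have hb0 : 0 < b := lt_trans ha0 hgt
    have hlam : lam ≠ 0 := by
      intro h
      have hcontr := hb0
      rw [hb, h] at hcontr
      simp at hcontr
    have hbne : b ≠ 0 := hb0.ne'
    refine ⟨fun k => if n ≤ k then -(lam ^ (n - 1 - k)) else 0, ?_, ?_⟩
    · apply mem_space_of_bound δ₁ δ₂ _
        (fun k => if n ≤ k then (((a ^ n : ℝ) / b) ^ 2) * (((a / b) ^ 2) ^ (k - n).toNat) else 0)
      · exact summable_right _ _ (by positivity) (by
          have : a / b < 1 := (div_lt_one hb0).2 hgt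
          nlinarith [div_nonneg ha0.le hb0.le]) n
      · intro k
        beta_reduce
        by_cases hk : n ≤ k
        · rw [if_pos hk, if_pos hk]
          set m : ℕ := (k - n).toNat with hm
          have hkm : k = n + (m : ℤ) := by omega
          rw [norm_neg, norm_zpow]
          have hw : w δ₁ δ₂ k ≤ a ^ k := w_le_two δ₁ δ₂ hδ k
          have key : (a ^ k * b ^ (n - 1 - k : ℤ)) ^ 2
              = (((a ^ n : ℝ) / b) ^ 2) * (((a / b) ^ 2) ^ m) := by
            have hak : a ^ k = a ^ n * a ^ m := by
              rw [hkm, zpow_add₀ ha0.ne', zpow_natCast]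
            have hbk : b ^ (n - 1 - k : ℤ) = b⁻¹ * (b⁻¹) ^ m := by
              have : n - 1 - k = -1 - (m : ℤ) := by omega
              rw [this, zpow_sub₀ hbne, zpow_neg_one, zpow_natCast, inv_pow, div_eq_mul_inv]
            rw [hak, hbk]
            field_simp
            ring
          calc (w δ₁ δ₂ k * b ^ (n - 1 - k : ℤ)) ^ 2 ≤ (a ^ k * b ^ (n - 1 - k : ℤ)) ^ 2 := by
                have hz : (0:ℝ) < b ^ (n - 1 - k : ℤ) := zpow_pos hb0 _
                have h2 : w δ₁ δ₂ k * b ^ (n - 1 - k : ℤ) ≤ a ^ k * b ^ (n - 1 - k : ℤ) :=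
                  mul_le_mul_of_nonneg_right hw hz.le
                exact pow_le_pow_left₀ (mul_nonneg (w_pos δ₁ δ₂ k).le hz.le) h2 2
            _ = _ := key
        · rw [if_neg hk, if_neg hk]
          simp
    · intro k
      beta_reduce
      rcases lt_trichotomy k n with hkn | hkn | hkn
      · rw [if_neg (by omega : ¬ n ≤ k - 1), if_neg (by omega : ¬ n ≤ k)]
        rw [Pi.single_apply, if_neg (by omega : k ≠ n)]
        ring
      · subst hkn
        rw [if_neg (by omega : ¬ k ≤ k - 1), if_pos (le_refl k)]
        have : k - 1 - k = -1 := by omega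
        rw [this, zpow_neg_one]
        simp [mul_inv_cancel₀ hlam]
      · rw [if_pos (by omega : n ≤ k - 1), if_pos (by omega : n ≤ k)]
        have e1 : n - 1 - (k - 1) = n - k := by omega
        have e2 : lam * lam ^ (n - 1 - k) = lam ^ (n - k) := by
          have hnk : n - k = 1 + (n - 1 - k) := by omega
          rw [hnk, zpow_add₀ hlam, zpow_one]
        rw [e1, Pi.single_apply, if_neg (by omega : k ≠ n)]
        rw [mul_neg, e2]
        ring

end ShiftAux

open WeightedL2 in
/-- Assume `δ₂ ≤ δ₁` and let `λ` be a complex number with `|λ|` different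
from `e^{δ₁}` and from `e^{δ₂}`. Then every finitely supported sequence lies in the range
of the operator `T − λI` on `ℓ²_{δ₁,δ₂}`. -/
theorem finitelySupported_mem_range_shift_sub_smul_id (δ₁ δ₂ : ℝ) (hδ : δ₂ ≤ δ₁)
    (T : space δ₁ δ₂ →L[ℂ] space δ₁ δ₂)
    (hT : ∀ (x : space δ₁ δ₂) (k : ℤ), (T x : ℤ → ℂ) k = (x : ℤ → ℂ) (k - 1))
    (lam : ℂ) (h₁ : ‖lam‖ ≠ Real.exp δ₁) (h₂ : ‖lam‖ ≠ Real.exp δ₂) :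
    ∀ x : space δ₁ δ₂, (Function.support (x : ℤ → ℂ)).Finite →
      x ∈ LinearMap.range ((T - lam • 1 : space δ₁ δ₂ →L[ℂ] space δ₁ δ₂) : space δ₁ δ₂ →ₗ[ℂ] space δ₁ δ₂) := by
  intro x hfin
  have hmem : ∀ n : ℤ, (Pi.single n (1:ℂ) : ℤ → ℂ) ∈ space δ₁ δ₂ := by
    intro n
    apply memℓp_gen
    have h2 : (2 : ENNReal).toReal = 2 := by norm_num
    rw [h2]
    apply summable_of_ne_finset_zero (s := ({n} : Finset ℤ))
    intro k hk
    simp only [Finset.mem_singleton] at hk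
    simp [wmul, Pi.single_apply, hk]
  have hx : x = ∑ n ∈ hfin.toFinset,
      (x : ℤ → ℂ) n • (⟨Pi.single n 1, hmem n⟩ : space δ₁ δ₂) := by
    apply Subtype.coe_injective
    show (x : ℤ → ℂ) = ((∑ n ∈ hfin.toFinset,
      (x : ℤ → ℂ) n • (⟨Pi.single n 1, hmem n⟩ : space δ₁ δ₂) : space δ₁ δ₂) : ℤ → ℂ)
    rw [AddSubmonoidClass.coe_finset_sum]
    funext k
    rw [Finset.sum_apply]
    simp only [SetLike.val_smul, Pi.smul_apply, smul_eq_mul, Pi.single_apply,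
      mul_ite, mul_one, mul_zero]
    rw [Finset.sum_ite_eq hfin.toFinset k _]
    by_cases hks : k ∈ hfin.toFinset
    · rw [if_pos hks]
    · rw [if_neg hks]
      have hsupp : k ∉ Function.support (x : ℤ → ℂ) := by
        simpa [hfin.mem_toFinset] using hks
      simpa [Function.mem_support, not_not] using hsupp
  rw [hx]
  exact Submodule.sum_mem _ fun n _ => Submodule.smul_mem _ _
    (ShiftAux.single_mem_range δ₁ δ₂ hδ T hT lam h₁ h₂ n _ rfl)
end
end
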